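/- arXiv:2604.14488 — 5 statements merged into one kernel-verified Lean document; each statement's English description precedes it below -/
import Mathlib

section
/- Let D be a type and r : D → D → Prop a transitive relation. For every A : Set D, the active frontier of the authority closure equals the set of globally active documents inside the closure: front(cl(A)) = {d ∈ cl(A) | ¬∃ d' : D, r d d'}. In particular, no element of front(cl(A)) is superseded by any document in the entire corpus. (Claim used in the proof of Theorem 4: the active elements of cl(A) are exactly front(cl(A)).) -/
/-- Authority closure: `cl r A = A ∪ {d' | ∃ d ∈ A, r d d'}`. -/
def cl {D : Type*} (r : D → D → Prop) (A : Set D) : Set D :=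
  A ∪ {d' | ∃ d ∈ A, r d d'}

/-- Active frontier: the elements of `S` not superseded within `S`. -/
def front {D : Type*} (r : D → D → Prop) (S : Set D) : Set D :=
  {d ∈ S | ¬∃ d' ∈ S, r d d'}

/-- For a transitive supersession relation, the active frontier of the
authority closure equals the set of globally active documents inside the
closure: no element of `front (cl A)` is superseded by any document in the
entire corpus. -/
theorem stmt_5 {D : Type*} (r : D → D → Prop) (hr : Transitive r)
    (A : Set D) :
    front r (cl r A) = {d ∈ cl r A | ¬∃ d' : D, r d d'} := by
  ext d
  constructor
  · rintro ⟨hd, hn⟩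
    refine ⟨hd, ?_⟩
    rintro ⟨d', hrd⟩
    apply hn
    refine ⟨d', ?_, hrd⟩
    rcases hd with h | ⟨a, ha, har⟩
    · exact Or.inr ⟨d, h, hrd⟩
    · exact Or.inr ⟨a, ha, hr har hrd⟩
  · rintro ⟨hd, hn⟩
    exact ⟨hd, fun ⟨d', _, hrd⟩ => hn ⟨d', hrd⟩⟩
end

section
/- Let D be a type and r : D → D → Prop a transitive relation. For every A : Set D, the retrieved set R = cl(A) satisfies NoIgnoredSuperseder: for every d ∈ cl(A) such that some d'' : D has r d d'', there exists d' ∈ cl(A) with r d d'. (Theorem 3, non-necessity of step (iii): returning the full authority closure instead of its frontier still satisfies the NoIgnoredSuperseder condition.) -/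
/-- Theorem 3, non-necessity of step (iii): the retrieved set `R = cl A`
satisfies NoIgnoredSuperseder for a transitive supersession relation. -/
theorem stmt_6 {D : Type*} (r : D → D → Prop) (hr : Transitive r)
    (A : Set D) :
    ∀ d ∈ cl r A, (∃ d'' : D, r d d'') → ∃ d' ∈ cl r A, r d d' := by
  rintro d (hd | ⟨a, ha, had⟩) ⟨d'', hdd⟩
  · exact ⟨d'', Or.inr ⟨d, hd, hdd⟩, hdd⟩
  · exact ⟨d'', Or.inr ⟨a, ha, hr had hdd⟩, hdd⟩
end

section
/- Let D be a finite type and r : D → D → Prop a transitive irreflexive relation. Let A, R : Set D satisfy front(cl(A)) ⊆ R ⊆ cl(A). Then R satisfies both structural conditions of Theorem 4: (i) frontier inclusion, front(cl(A)) ⊆ R; and (ii) NoIgnoredSuperseder: for every d ∈ R such that some d'' : D has r d d'', there exists d' ∈ R with r d d' — indeed one may take d' ∈ front(cl(A)). (Structural content of the sufficiency direction of Theorem 4, CAR-Correctness Characterization.) -/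
/-- Sufficiency direction of Theorem 4 (CAR-Correctness Characterization):
any retrieved set `R` with `front (cl A) ⊆ R ⊆ cl A` satisfies frontier
inclusion and NoIgnoredSuperseder, with the witnessing superseder taken from
`front (cl A)`. -/
theorem stmt_7 {D : Type*} [Finite D] (r : D → D → Prop)
    (htrans : Transitive r) (hirr : Irreflexive r)
    (A R : Set D) (h1 : front r (cl r A) ⊆ R) (h2 : R ⊆ cl r A) :
    front r (cl r A) ⊆ R ∧
    ∀ d ∈ R, (∃ d'' : D, r d d'') →
      ∃ d' ∈ R, r d d' ∧ d' ∈ front r (cl r A) := by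
  refine ⟨h1, ?_⟩
  intro d hdR ⟨d'', hd''⟩
  -- cl is closed under r
  have hclosed : ∀ x ∈ cl r A, ∀ y, r x y → y ∈ cl r A := by
    rintro x (hx | ⟨a, ha, hax⟩) y hxy
    · exact Or.inr ⟨x, hx, hxy⟩
    · exact Or.inr ⟨a, ha, htrans hax hxy⟩
  haveI : IsTrans D (flip r) := ⟨fun a b c h1 h2 => htrans h2 h1⟩
  haveI : IsIrrefl D (flip r) := ⟨hirr⟩
  have hwf : WellFounded (flip r) := Finite.wellFounded_of_trans_of_irrefl (flip r)
  have hdcl : d ∈ cl r A := h2 hdR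
  set S : Set D := {x | x ∈ cl r A ∧ r d x} with hS
  have hSne : S.Nonempty := ⟨d'', hclosed d hdcl d'' hd'', hd''⟩
  obtain ⟨m, ⟨hmcl, hdm⟩, hmin⟩ := hwf.has_min S hSne
  have hmfront : m ∈ front r (cl r A) := by
    refine ⟨hmcl, ?_⟩
    rintro ⟨y, hy, hmy⟩
    exact hmin y ⟨hy, htrans hdm hmy⟩ hmy
  exact ⟨m, h1 hmfront, hdm, hmfront⟩
end

section
/- Let D be a type, r : D → D → Prop an irreflexive relation, S : Set D, and x : D with x ∉ S. Suppose no existing document supersedes the new document: for all d ∈ S, ¬ r x d. Then the active frontier after inserting x is front(S ∪ {x}) = {d ∈ front(S) | ¬ r d x} ∪ {x}: the new document joins the frontier, and exactly those previous frontier elements that x supersedes are removed. (Incremental update structure of Streaming CAR.) -/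
/-- Incremental update structure of Streaming CAR: when a new document `x`
(superseded by no existing document) is inserted, it joins the frontier and
exactly the previous frontier elements that `x` supersedes are removed. -/
theorem stmt_9 {D : Type*} (r : D → D → Prop) (hirr : Irreflexive r)
    (S : Set D) (x : D) (hx : x ∉ S) (hnew : ∀ d ∈ S, ¬ r x d) :
    front r (S ∪ {x}) = {d ∈ front r S | ¬ r d x} ∪ {x} := by
  ext d
  simp only [front, Set.mem_union, Set.mem_setOf_eq, Set.mem_singleton_iff]
  constructor
  · rintro ⟨hd | rfl, hne⟩
    · exact Or.inl ⟨⟨hd, fun ⟨d', hd', hr⟩ => hne ⟨d', Or.inl hd', hr⟩⟩,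
        fun hr => hne ⟨x, Or.inr rfl, hr⟩⟩
    · exact Or.inr rfl
  · rintro (⟨⟨hd, hne⟩, hnx⟩ | rfl)
    · refine ⟨Or.inl hd, ?_⟩
      rintro ⟨d', hd' | rfl, hr⟩
      · exact hne ⟨d', hd', hr⟩
      · exact hnx hr
    · refine ⟨Or.inr rfl, ?_⟩
      rintro ⟨d', hd' | rfl, hr⟩
      · exact hnew d' hd' hr
      · exact hirr _ hr
end

section
/- For every natural number k ≥ 1 there exist a finite type K, a score function s : K → ℝ, a transitive irreflexive relation r : K → K → Prop, and distinct elements d₁, d* ∈ K with r d₁ d* such that d* is the unique element superseding d₁, and every k-element subset R of K maximizing the total score ∑_{d ∈ R} s(d) satisfies: d₁ ∈ R (anchor recall is 1) and d* ∉ R; consequently R violates NoIgnoredSuperseder, since d₁ ∈ R is superseded but no superseder of d₁ lies in R. (Structural content of Theorem 1, Objective Mismatch: a relevance-based retriever retrieves the anchor yet provably ignores its controlling superseder.) -/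
/-- Structural content of Theorem 1 (Objective Mismatch): for every `k ≥ 1`
there is a finite corpus `K`, a relevance score `s`, a transitive irreflexive
supersession relation `r`, an anchor `d₁` and its unique superseder `d*` such
that every score-maximizing `k`-element subset `R` contains `d₁` but not `d*`;
consequently `R` violates NoIgnoredSuperseder: some `d ∈ R` is superseded yet
no superseder of `d` lies in `R`. -/
theorem stmt_13 (k : ℕ) (hk : 1 ≤ k) :
    ∃ (K : Type) (_ : Fintype K) (s : K → ℝ) (r : K → K → Prop)
      (d₁ dstar : K),
      Transitive r ∧ Irreflexive r ∧ d₁ ≠ dstar ∧ r d₁ dstar ∧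
      (∀ d : K, r d₁ d → d = dstar) ∧
      ∀ R : Finset K, R.card = k →
        (∀ R' : Finset K, R'.card = k → ∑ d ∈ R', s d ≤ ∑ d ∈ R, s d) →
        d₁ ∈ R ∧ dstar ∉ R ∧
        ∃ d ∈ R, (∃ d'' : K, r d d'') ∧ ∀ d' ∈ R, ¬ r d d' := by
  set L : Fin (k+1) := Fin.last k with hL
  have hne : (0 : Fin (k+1)) ≠ L := by
    intro h
    have := congrArg Fin.val h
    simp [hL, Fin.last] at this
    omega
  refine ⟨Fin (k+1), inferInstance,
    (fun d => if d = L then (0:ℝ) else 1),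
    (fun a b => a = 0 ∧ b = L), 0, L, ?_, ?_, hne, ⟨rfl, rfl⟩, fun d h => h.2, ?_⟩
  · rintro a b c ⟨-, hb⟩ ⟨hb', -⟩
    exact absurd (hb'.symm.trans hb) hne
  · rintro a ⟨h0, hl⟩
    exact hne (h0 ▸ hl)
  · intro R hcard hmax
    -- the canonical optimal set
    have hcardR' : (Finset.univ.erase L).card = k := by
      rw [Finset.card_erase_of_mem (Finset.mem_univ _)]
      simp
    have hsumR' : ∑ d ∈ Finset.univ.erase L, (if d = L then (0:ℝ) else 1) = k := by
      rw [Finset.sum_congr rfl (fun d hd => if_neg (Finset.ne_of_mem_erase hd))]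
      simp [hcardR']
    have hle := hmax _ hcardR'
    rw [hsumR'] at hle
    have hLnot : L ∉ R := by
      intro hLR
      have h1 : ∑ d ∈ R, (if d = L then (0:ℝ) else 1)
          = ∑ d ∈ R.erase L, (if d = L then (0:ℝ) else 1) := by
        rw [← Finset.add_sum_erase R _ hLR]
        simp
      have h2 : ∑ d ∈ R.erase L, (if d = L then (0:ℝ) else 1)
          ≤ (R.erase L).card • (1:ℝ) := by
        apply Finset.sum_le_card_nsmul
        intro x hx
        split <;> norm_num
      rw [Finset.card_erase_of_mem hLR, hcard] at h2
      have : (k:ℝ) ≤ (k - 1 : ℕ) • (1:ℝ) := le_trans hle (h1 ▸ h2)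
      simp at this
      omega
    have hRsub : R ⊆ Finset.univ.erase L := fun x hx =>
      Finset.mem_erase.mpr ⟨fun h => hLnot (h ▸ hx), Finset.mem_univ x⟩
    have hReq : R = Finset.univ.erase L :=
      Finset.eq_of_subset_of_card_le hRsub (by rw [hcard, hcardR'])
    have h0R : (0 : Fin (k+1)) ∈ R := by
      rw [hReq]
      exact Finset.mem_erase.mpr ⟨hne, Finset.mem_univ _⟩
    exact ⟨h0R, hLnot, 0, h0R, ⟨L, rfl, rfl⟩, fun d' hd' h => hLnot (h.2 ▸ hd')⟩
end
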